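/- arXiv:1009.1067 — 2 statements merged into one kernel-verified Lean document; each statement's English description precedes it below -/
import Mathlib

section
/- Let k₁, k₂ ≥ 4 be even and n ≥ 1 an integer. If g₁ ∈ M_{k₁}(SL(2,ℤ)) and g₂ ∈ M_{k₂}(SL(2,ℤ)), then the Rankin–Cohen bracket [g₁, g₂]_n is a cusp form of weight k₁ + k₂ + 2n for SL(2,ℤ). -/
noncomputable section

open Complex Filter MeasureTheory

abbrev SL2Z := Matrix.SpecialLinearGroup (Fin 2) ℤ
abbrev SL2R := Matrix.SpecialLinearGroup (Fin 2) ℝ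

/-- `j(γ,z) = cz+d` for `γ ∈ SL(2,ℤ)`. -/
def jZ (γ : SL2Z) (z : ℂ) : ℂ := ((γ 1 0 : ℤ) : ℂ) * z + ((γ 1 1 : ℤ) : ℂ)

/-- The Möbius action `γz = (az+b)/(cz+d)` for `γ ∈ SL(2,ℤ)`. -/
def actZ (γ : SL2Z) (z : ℂ) : ℂ := (((γ 0 0 : ℤ) : ℂ) * z + ((γ 0 1 : ℤ) : ℂ)) / jZ γ z

/-- `j(γ,z) = cz+d` for `γ ∈ SL(2,ℝ)`. -/
def jR (γ : SL2R) (z : ℂ) : ℂ := ((γ 1 0 : ℝ) : ℂ) * z + ((γ 1 1 : ℝ) : ℂ)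

/-- The Möbius action for `γ ∈ SL(2,ℝ)`. -/
def actR (γ : SL2R) (z : ℂ) : ℂ := (((γ 0 0 : ℝ) : ℂ) * z + ((γ 0 1 : ℝ) : ℂ)) / jR γ z

/-- Coprime pairs `(c,d)`, parametrizing the cosets `B\Γ` via the bottom row. -/
def CP : Type := {p : ℤ × ℤ // IsCoprime p.1 p.2}

/-- Coprime pairs with normalized sign, parametrizing `Γ∞\Γ` via the bottom row. -/
def CP1 : Type := {p : ℤ × ℤ // IsCoprime p.1 p.2 ∧ (0 < p.1 ∨ (p.1 = 0 ∧ 0 < p.2))}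

/-- `j(γ,z) = cz+d` in terms of the bottom row. -/
def jP (p : ℤ × ℤ) (z : ℂ) : ℂ := (p.1 : ℂ) * z + (p.2 : ℂ)

/-- `c_{γδ⁻¹} = c_γ d_δ − d_γ c_δ` in terms of the bottom rows of `γ, δ`. -/
def crossP (p q : ℤ × ℤ) : ℤ := p.1 * q.2 - p.2 * q.1

/-- `Im(γz) = Im z / |cz+d|²` in terms of the bottom row of `γ`. -/
def imP (p : ℤ × ℤ) (z : ℂ) : ℝ := z.im / Complex.normSq (jP p z)

/-- A representative Möbius action for a coset with bottom row the coprime pair `(c,d)`: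
choosing `a, b` with `ad−bc = 1`, return `(az+b)/(cz+d)`. -/
def mobiusP (p : ℤ × ℤ) (h : IsCoprime p.1 p.2) (z : ℂ) : ℂ :=
  ((h.choose_spec.choose : ℂ) * z - (h.choose : ℂ)) / jP p z

def mobiusCP (p : CP) (z : ℂ) : ℂ := mobiusP p.1 p.2 z
def mobiusCP1 (p : CP1) (z : ℂ) : ℂ := mobiusP p.1 p.2.1 z

/-- The term of the double Eisenstein series `E_{s,k-s}(z,w)`. -/
def dblEisTerm (k : ℤ) (s w : ℂ) (z : ℂ) (pq : CP × CP) : ℂ :=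
  if 0 < crossP pq.1.1 pq.2.1 then
    ((crossP pq.1.1 pq.2.1 : ℤ) : ℂ) ^ (w - 1) * (jP pq.1.1 z / jP pq.2.1 z) ^ (-s) *
      (jP pq.2.1 z) ^ (-k)
  else 0

/-- The double Eisenstein series `E_{s,k-s}(z,w)`. -/
def dblEis (k : ℤ) (s w : ℂ) (z : ℂ) : ℂ := ∑' pq : CP × CP, dblEisTerm k s w z pq

/-- The completing factor for `E*_{s,k-s}(z,w)`. -/
def eisFactor (k : ℤ) (s w : ℂ) : ℂ :=
  Complex.exp (s * Real.pi * I / 2) * Complex.Gamma s * Complex.Gamma ((k : ℂ) - s) *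
      Complex.Gamma ((k : ℂ) - w) * riemannZeta (1 - w + s) * riemannZeta (1 - w + (k : ℂ) - s) /
    ((2 : ℂ) ^ ((3 : ℂ) - w) * (Real.pi : ℂ) ^ ((k : ℂ) + 1 - w) * Complex.Gamma ((k : ℂ) - 1))

/-- The completed double Eisenstein series `E*_{s,k-s}(z,w)`. -/
def dblEisStar (k : ℤ) (s w : ℂ) (z : ℂ) : ℂ := eisFactor k s w * dblEis k s w z

/-- The weight-`k` Hecke operator `T_n`. -/
def hecke (k : ℤ) (n : ℕ) (f : ℂ → ℂ) (z : ℂ) : ℂ :=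
  (n : ℂ) ^ (k - 1) * ∑ p ∈ n.divisorsAntidiagonal,
    ((p.2 : ℕ) : ℂ) ^ (-k) * ∑ b ∈ Finset.range p.2, f (((p.1 : ℂ) * z + (b : ℂ)) / (p.2 : ℂ))

/-- The completed `L`-function `L*(f,s) = ∫_0^∞ f(iy) y^{s-1} dy`. -/
def Lstar (f : ℂ → ℂ) (s : ℂ) : ℂ := ∫ y in Set.Ioi (0 : ℝ), f ((y : ℂ) * I) * (y : ℂ) ^ (s - 1)

/-- The twisted completed `L`-function `L*(f,s;x) = ∫_0^∞ f(iy+x) y^{s-1} dy`. -/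
def LstarT (f : ℂ → ℂ) (s : ℂ) (x : ℚ) : ℂ :=
  ∫ y in Set.Ioi (0 : ℝ), f ((x : ℂ) + (y : ℂ) * I) * (y : ℂ) ^ (s - 1)

/-- The standard fundamental domain for `SL(2,ℤ)\ℍ`, as a subset of `ℝ²`. -/
def fundDom : Set (ℝ × ℝ) := {p | 0 < p.2 ∧ |p.1| ≤ 1 / 2 ∧ 1 ≤ p.1 ^ 2 + p.2 ^ 2}

/-- The Petersson inner product `⟨g,f⟩ = ∫_F g(z) conj(f(z)) y^k dx dy / y²`. -/
def petersson (k : ℤ) (g f : ℂ → ℂ) : ℂ :=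
  ∫ p in fundDom, g ((p.1 : ℂ) + (p.2 : ℂ) * I) * (starRingEnd ℂ) (f ((p.1 : ℂ) + (p.2 : ℂ) * I)) *
    ((p.2 : ℂ)) ^ (k - 2)

/-- `f` is a normalized Hecke eigenform of weight `k` for `SL(2,ℤ)`, with Fourier
coefficients `a`. -/
structure IsHeckeEigenform (k : ℤ) (f : ℂ → ℂ) (a : ℕ → ℂ) : Prop where
  holo : DifferentiableOn ℂ f {z : ℂ | 0 < z.im}
  transform : ∀ γ : SL2Z, ∀ z : ℂ, 0 < z.im → f (actZ γ z) = jZ γ z ^ k * f z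
  expansion : ∀ z : ℂ, 0 < z.im →
    HasSum (fun n : ℕ => a n * Complex.exp (2 * Real.pi * I * (n : ℂ) * z)) (f z)
  cusp : a 0 = 0
  normalized : a 1 = 1
  eigen : ∀ n : ℕ, 0 < n → ∃ lam : ℂ, ∀ z : ℂ, 0 < z.im → hecke k n f z = lam * f z

/-- The generalized Cohen kernel `C_k(z,s;x)`. -/
def cohen (k : ℤ) (s : ℂ) (x : ℚ) (z : ℂ) : ℂ :=
  (1 / 2) * ∑' γ : SL2Z, (actZ γ z + (x : ℂ)) ^ (-s) * (jZ γ z) ^ (-k)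

/-- The Poincaré series `P_k(z;m)` (over `Γ∞\Γ`). -/
def poincare (k : ℤ) (m : ℕ) (z : ℂ) : ℂ :=
  ∑' p : CP1, Complex.exp (2 * Real.pi * I * (m : ℂ) * mobiusCP1 p z) * (jP p.1 z) ^ (-k)

/-- The series `Q_k(z,l;m)`. -/
def Qser (k : ℤ) (l m : ℕ) (z : ℂ) : ℂ :=
  if l = 0 then poincare k m z
  else (1 / 2) * ∑' p : CP, Complex.exp (2 * Real.pi * I * (m : ℂ) * mobiusCP p z) *
    ((p.1.1 : ℂ)) ^ l * (jP p.1 z) ^ (-(k + (l : ℤ)))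

/-- The Rankin–Cohen bracket `[g₁,g₂]_n` of weights `k₁, k₂`. -/
def RC (k₁ k₂ n : ℕ) (g₁ g₂ : ℂ → ℂ) (z : ℂ) : ℂ :=
  ∑ r ∈ Finset.range (n + 1), (-1 : ℂ) ^ r * (Nat.choose (k₁ + n - 1) (n - r) : ℂ) *
    (Nat.choose (k₂ + n - 1) r : ℂ) * iteratedDeriv r g₁ z * iteratedDeriv (n - r) g₂ z

/-- The coefficient `A_{k₁,k₂}(l,u)_n`. -/
def Acoef (k₁ k₂ l u n : ℕ) : ℂ :=
  ((Nat.factorial (k₁ + n - 1) * Nat.factorial (k₂ + n - 1) : ℕ) : ℂ) /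
    ((Nat.factorial l * Nat.factorial u * Nat.factorial (n - l - u) *
      Nat.factorial (k₁ + l - 1) * Nat.factorial (k₂ + u - 1) : ℕ) : ℂ)

/-- The term of the double Poincaré series. -/
def dblPoinTerm (k₁ k₂ : ℤ) (w : ℂ) (m₁ m₂ : ℕ) (z : ℂ) (pq : CP × CP) : ℂ :=
  if 0 < crossP pq.1.1 pq.2.1 then
    ((crossP pq.1.1 pq.2.1 : ℤ) : ℂ) ^ (w - 1) *
      Complex.exp (2 * Real.pi * I * ((m₁ : ℂ) * mobiusCP pq.1 z + (m₂ : ℂ) * mobiusCP pq.2 z)) *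
      (jP pq.1.1 z) ^ (-k₁) * (jP pq.2.1 z) ^ (-k₂)
  else 0

/-- The double Poincaré series `P_{k₁,k₂}(z,w;m₁,m₂)`. -/
def dblPoin (k₁ k₂ : ℤ) (w : ℂ) (m₁ m₂ : ℕ) (z : ℂ) : ℂ :=
  ∑' pq : CP × CP, dblPoinTerm k₁ k₂ w m₁ m₂ z pq

/-- The double Eisenstein series `E_{k₁,k₂}(z,w)` with two integral weights. -/
def dblEis2 (k₁ k₂ : ℤ) (w : ℂ) (z : ℂ) : ℂ :=
  ∑' pq : CP × CP, if 0 < crossP pq.1.1 pq.2.1 then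
    ((crossP pq.1.1 pq.2.1 : ℤ) : ℂ) ^ (w - 1) * (jP pq.1.1 z) ^ (-k₁) * (jP pq.2.1 z) ^ (-k₂)
  else 0

/-- `f` transforms with weight `k` under `SL(2,ℤ)`. -/
def IsWeaklyModular (k : ℤ) (f : ℂ → ℂ) : Prop :=
  ∀ γ : SL2Z, ∀ z : ℂ, 0 < z.im → f (actZ γ z) = jZ γ z ^ k * f z

/-- `f` is a holomorphic modular form of weight `k` for `SL(2,ℤ)`. -/
def IsModularForm (k : ℤ) (f : ℂ → ℂ) : Prop :=
  DifferentiableOn ℂ f {z : ℂ | 0 < z.im} ∧ IsWeaklyModular k f ∧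
    ∃ C A : ℝ, ∀ z : ℂ, A ≤ z.im → ‖f z‖ ≤ C

/-- `f` is a holomorphic cusp form of weight `k` for `SL(2,ℤ)`. -/
def IsCuspForm (k : ℤ) (f : ℂ → ℂ) : Prop :=
  DifferentiableOn ℂ f {z : ℂ | 0 < z.im} ∧ IsWeaklyModular k f ∧
    Tendsto f (comap Complex.im atTop) (nhds 0)

/-- The term of the non-holomorphic kernel `K(z;s,s')`. -/
def KkerTerm (z s s' : ℂ) (γ : SL2Z) : ℂ :=
  (((actZ γ z).im : ℝ) : ℂ) ^ (s + s') / ((‖actZ γ z‖ : ℝ) : ℂ) ^ (2 * s)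

/-- The non-holomorphic kernel `K(z;s,s') = (1/2) Σ_{γ ∈ SL(2,ℤ)} Im(γz)^{s+s'}/|γz|^{2s}`. -/
def Kker (z s s' : ℂ) : ℂ := (1 / 2) * ∑' γ : SL2Z, KkerTerm z s s' γ

/-- The term of the non-holomorphic double Eisenstein series `ℰ(z,w;s,s')`. -/
def nhTerm (w s s' : ℂ) (z : ℂ) (pq : CP1 × CP1) : ℂ :=
  if crossP pq.1.1 pq.2.1 ≠ 0 then
    ((imP pq.1.1 z : ℝ) : ℂ) ^ s * ((imP pq.2.1 z : ℝ) : ℂ) ^ s' *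
      ((|crossP pq.1.1 pq.2.1| : ℤ) : ℂ) ^ (-w)
  else 0

/-- The non-holomorphic double Eisenstein series `ℰ(z,w;s,s')`. -/
def nhE (z : ℂ) (w s s' : ℂ) : ℂ := ∑' pq : CP1 × CP1, nhTerm w s s' z pq

/-- `g` is a cusp form of weight `k` with Fourier coefficients `b`. -/
structure IsCuspFormWithCoeffs (k : ℤ) (g : ℂ → ℂ) (b : ℕ → ℂ) : Prop where
  holo : DifferentiableOn ℂ g {z : ℂ | 0 < z.im}
  transform : ∀ γ : SL2Z, ∀ z : ℂ, 0 < z.im → g (actZ γ z) = jZ γ z ^ k * g z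
  expansion : ∀ z : ℂ, 0 < z.im →
    HasSum (fun n : ℕ => b n * Complex.exp (2 * Real.pi * I * (n : ℂ) * z)) (g z)
  czero : b 0 = 0

/-- The term of the quadruple-sum form of the double Eisenstein series:
`(ad−bc)^{w−1} ((az+b)/(cz+d))^{−s} (cz+d)^{−k}` for `ad−bc > 0`. -/
def quadTerm (k : ℤ) (s w : ℂ) (z : ℂ) (v : ℤ × ℤ × ℤ × ℤ) : ℂ :=
  if 0 < v.1 * v.2.2.2 - v.2.1 * v.2.2.1 then
    ((v.1 * v.2.2.2 - v.2.1 * v.2.2.1 : ℤ) : ℂ) ^ (w - 1) *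
      (((v.1 : ℂ) * z + (v.2.1 : ℂ)) / ((v.2.2.1 : ℂ) * z + (v.2.2.2 : ℂ))) ^ (-s) *
      ((v.2.2.1 : ℂ) * z + (v.2.2.2 : ℂ)) ^ (-k)
  else 0

/-- The twisted version: `(ad−bc)^{w−1} ((az+b)/(cz+d) + x)^{−s} (cz+d)^{−k}` for `ad−bc > 0`. -/
def quadTermT (k : ℤ) (s w : ℂ) (x : ℚ) (z : ℂ) (v : ℤ × ℤ × ℤ × ℤ) : ℂ :=
  if 0 < v.1 * v.2.2.2 - v.2.1 * v.2.2.1 then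
    ((v.1 * v.2.2.2 - v.2.1 * v.2.2.1 : ℤ) : ℂ) ^ (w - 1) *
      (((v.1 : ℂ) * z + (v.2.1 : ℂ)) / ((v.2.2.1 : ℂ) * z + (v.2.2.2 : ℂ)) + (x : ℂ)) ^ (-s) *
      ((v.2.2.1 : ℂ) * z + (v.2.2.2 : ℂ)) ^ (-k)
  else 0

/-!
Differentiating `f (γ z) = (cz+d)^k f z` repeatedly gives
`f⁽ʳ⁾(γ z) = ∑_{t ≤ r} C(r,t) (k+t)(k+t+1)⋯(k+r-1) c^{r-t} (cz+d)^{k+r+t} f⁽ᵗ⁾(z)`.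
Substituting this into the bracket, the coefficient of `c^{n-t-u} f⁽ᵗ⁾ g⁽ᵘ⁾` becomes, once the
factorials are cleared, a multiple of `∑ᵢ (-1)^i C(n-t-u, i)`, which vanishes unless `t + u = n`;
what survives is `(cz+d)^{k₁+k₂+2n}` times the bracket at `z`.

Cusp condition: by Cauchy's estimate on discs of radius `Im z - A`, every derivative of positive
order of a holomorphic function bounded on `Im z ≥ A` tends to `0` as `Im z → ∞`, and for `n ≥ 1`
every term of the bracket contains such a derivative.
-/

open Finset Topology

lemma DifferentiableOn.iteratedDeriv_of_isOpen {f : ℂ → ℂ} {U : Set ℂ} (hU : IsOpen U)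
    (hf : DifferentiableOn ℂ f U) (r : ℕ) : DifferentiableOn ℂ (iteratedDeriv r f) U := by
  induction r with
  | zero => simpa using hf
  | succ r ih => simpa [iteratedDeriv_succ] using ih.deriv hU

lemma actZ_eq_coe_smul (γ : SL2Z) {z : ℂ} (hz : 0 < z.im) :
    actZ γ z = ↑(γ • (⟨z, hz⟩ : UpperHalfPlane)) := by
  rw [UpperHalfPlane.coe_specialLinearGroup_apply]
  simp [actZ, jZ]

lemma im_actZ_pos (γ : SL2Z) {z : ℂ} (hz : 0 < z.im) : 0 < (actZ γ z).im := by
  rw [actZ_eq_coe_smul γ hz]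
  exact UpperHalfPlane.im_pos _

lemma jZ_ne_zero (γ : SL2Z) {z : ℂ} (hz : 0 < z.im) : jZ γ z ≠ 0 := by
  intro h
  -- otherwise `actZ γ z = _ / 0 = 0` would not lie in the upper half plane
  simpa [actZ, h] using im_actZ_pos γ hz

lemma hasDerivAt_jZ (γ : SL2Z) (z : ℂ) : HasDerivAt (jZ γ) (γ 1 0 : ℂ) z :=
  (((hasDerivAt_id' z).const_mul _).add_const _).congr_deriv (mul_one _)

lemma hasDerivAt_actZ (γ : SL2Z) {z : ℂ} (hz : 0 < z.im) :
    HasDerivAt (actZ γ) (jZ γ z ^ 2)⁻¹ z := by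
  have hdet : (γ 0 0 : ℂ) * γ 1 1 - γ 0 1 * γ 1 0 = 1 := by
    have := γ.det_coe
    rw [Matrix.det_fin_two] at this
    exact_mod_cast this
  have hnum : HasDerivAt (fun w => (γ 0 0 : ℂ) * w + γ 0 1) (γ 0 0 : ℂ) z :=
    (((hasDerivAt_id' z).const_mul _).add_const _).congr_deriv (mul_one _)
  refine (hnum.div (hasDerivAt_jZ γ z) (jZ_ne_zero γ hz)).congr_deriv ?_
  rw [inv_eq_one_div, jZ]
  congr 1
  linear_combination hdet

def derivTransformCoeff (k r t : ℕ) : ℕ := r.choose t * (k + t).ascFactorial (r - t)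

lemma derivTransformCoeff_eq_zero_of_lt {k r t : ℕ} (h : r < t) :
    derivTransformCoeff k r t = 0 := by
  simp [derivTransformCoeff, Nat.choose_eq_zero_of_lt h]

@[simp]
lemma derivTransformCoeff_self (k r : ℕ) : derivTransformCoeff k r r = 1 := by
  simp [derivTransformCoeff]

lemma derivTransformCoeff_succ_zero (k r : ℕ) :
    derivTransformCoeff k (r + 1) 0 = (k + r) * derivTransformCoeff k r 0 := by
  simp [derivTransformCoeff, Nat.ascFactorial_succ]

lemma derivTransformCoeff_succ_succ (k r t : ℕ) :
    derivTransformCoeff k (r + 1) (t + 1) =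
      (k + r + t + 1) * derivTransformCoeff k r (t + 1) + derivTransformCoeff k r t := by
  rcases lt_or_ge r t with h | h
  · simp [derivTransformCoeff_eq_zero_of_lt, h, Nat.lt_succ_of_lt h]
  obtain ⟨s, rfl⟩ := Nat.exists_eq_add_of_le h
  rcases s with _ | s
  · simp [derivTransformCoeff]
  have hchoose := Nat.choose_succ_right_eq (t + (s + 1)) t
  rw [show t + (s + 1) - t = s + 1 by omega] at hchoose
  have hasc : (k + t).ascFactorial (s + 1) = (k + t) * (k + t + 1).ascFactorial s := by
    rw [Nat.ascFactorial_succ, ← Nat.succ_ascFactorial]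
  rw [derivTransformCoeff, derivTransformCoeff, derivTransformCoeff,
    show t + (s + 1) + 1 - (t + 1) = s + 1 by omega, show t + (s + 1) - (t + 1) = s by omega,
    show t + (s + 1) - t = s + 1 by omega, hasc, Nat.ascFactorial_succ, Nat.choose_succ_succ']
  linear_combination (k + t + 1).ascFactorial s * hchoose.symm

lemma derivTransformCoeff_mul_factorial {k r t : ℕ} (hk : 1 ≤ k) (h : t ≤ r) :
    derivTransformCoeff k r t * (t.factorial * (r - t).factorial * (k + t - 1).factorial) =
      r.factorial * (k + r - 1).factorial := by
  have hchoose := Nat.choose_mul_factorial_mul_factorial h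
  have hasc := Nat.factorial_mul_ascFactorial' (k + t) (r - t) (by omega)
  rw [show k + t + (r - t) - 1 = k + r - 1 by omega] at hasc
  rw [← hchoose, ← hasc, derivTransformCoeff]
  ring

lemma sum_derivTransformCoeff_succ (k r : ℕ) (c J : ℂ) (F : ℕ → ℂ) :
    ∑ t ∈ range (r + 1), (derivTransformCoeff k r t : ℂ) * c ^ (r - t) *
        ((k + r + t : ℕ) * c * J ^ (k + r + t + 1) * F t + J ^ (k + r + t + 2) * F (t + 1)) =
      ∑ t ∈ range (r + 2), (derivTransformCoeff k (r + 1) t : ℂ) * c ^ (r + 1 - t) *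
        J ^ (k + (r + 1) + t) * F t := by
  set A : ℕ → ℂ := fun t => (k + r + t : ℕ) * (derivTransformCoeff k r t : ℂ) *
    c ^ (r + 1 - t) * J ^ (k + r + t + 1) * F t
  set B : ℕ → ℂ := fun t => (derivTransformCoeff k r t : ℂ) * c ^ (r - t) *
    J ^ (k + r + t + 2) * F (t + 1)
  have hsplit : ∀ t ∈ range (r + 1), (derivTransformCoeff k r t : ℂ) * c ^ (r - t) *
      ((k + r + t : ℕ) * c * J ^ (k + r + t + 1) * F t + J ^ (k + r + t + 2) * F (t + 1)) =
      A t + B t := fun t ht => by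
    simp only [A, B]
    rw [show r + 1 - t = r - t + 1 by have := mem_range.1 ht; omega]
    ring
  have hA : ∑ t ∈ range (r + 1), A t = ∑ t ∈ range (r + 1), A (t + 1) + A 0 := by
    rw [← sum_range_succ', sum_range_succ _ (r + 1),
      show A (r + 1) = 0 by simp [A, derivTransformCoeff_eq_zero_of_lt], add_zero]
  rw [sum_congr rfl hsplit, sum_add_distrib, hA, show r + 2 = r + 1 + 1 from rfl,
    sum_range_succ' _ (r + 1), add_right_comm, ← sum_add_distrib]
  congr 1
  · refine sum_congr rfl fun t _ => ?_
    simp only [A, B, derivTransformCoeff_succ_succ, Nat.add_sub_add_right]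
    push_cast
    ring
  · simp only [A, derivTransformCoeff_succ_zero]
    push_cast
    ring

theorem iteratedDeriv_comp_actZ (γ : SL2Z) {k : ℕ} {f : ℂ → ℂ}
    (hf : DifferentiableOn ℂ f {z | 0 < z.im}) (hmod : IsWeaklyModular k f) (r : ℕ) {z : ℂ}
    (hz : 0 < z.im) :
    iteratedDeriv r f (actZ γ z) = ∑ t ∈ range (r + 1), (derivTransformCoeff k r t : ℂ) *
      (γ 1 0 : ℂ) ^ (r - t) * jZ γ z ^ (k + r + t) * iteratedDeriv t f z := by
  induction r generalizing z with
  | zero => simpa [derivTransformCoeff] using hmod γ z hz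
  | succ r ih =>
    have hH := UpperHalfPlane.isOpen_upperHalfPlaneSet
    have hderiv (t : ℕ) {w : ℂ} (hw : 0 < w.im) :
        HasDerivAt (iteratedDeriv t f) (iteratedDeriv (t + 1) f w) w := by
      rw [iteratedDeriv_succ]
      exact ((hf.iteratedDeriv_of_isOpen hH t).differentiableAt (hH.mem_nhds hw)).hasDerivAt
    have hlhs := (hderiv r (im_actZ_pos γ hz)).comp z (hasDerivAt_actZ γ hz)
    have hrhs := HasDerivAt.fun_sum (u := range (r + 1)) fun t _ =>
      ((((hasDerivAt_jZ γ z).pow (k + r + t)).mul (hderiv t hz)).const_mul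
        ((derivTransformCoeff k r t : ℂ) * (γ 1 0 : ℂ) ^ (r - t)))
    have hchain := hlhs.unique (hrhs.congr_of_eventuallyEq (eventually_of_mem (hH.mem_nhds hz)
      fun w hw => (ih (z := w) hw).trans (sum_congr rfl fun _ _ => mul_assoc _ _ _)))
    rw [mul_inv_eq_iff_eq_mul₀ (pow_ne_zero 2 (jZ_ne_zero γ hz))] at hchain
    have hpow (m : ℕ) : (m : ℂ) * jZ γ z ^ (m - 1) * jZ γ z ^ 2 = m * jZ γ z ^ (m + 1) := by
      rcases m with _ | m
      · simp
      · simp only [Nat.add_sub_cancel]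
        ring
    rw [hchain, ← sum_derivTransformCoeff_succ k r (γ 1 0 : ℂ) (jZ γ z) (iteratedDeriv · f z),
      sum_mul]
    refine sum_congr rfl fun t _ => ?_
    simp only [Pi.pow_apply]
    linear_combination ((derivTransformCoeff k r t : ℂ) * (γ 1 0 : ℂ) ^ (r - t) * (γ 1 0 : ℂ) *
      iteratedDeriv t f z) * hpow (k + r + t)

lemma iteratedDeriv_comp_actZ_of_le (γ : SL2Z) {k : ℕ} {f : ℂ → ℂ}
    (hf : DifferentiableOn ℂ f {z | 0 < z.im}) (hmod : IsWeaklyModular k f) {r N : ℕ}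
    (hr : r ≤ N) {z : ℂ} (hz : 0 < z.im) :
    iteratedDeriv r f (actZ γ z) = ∑ t ∈ range (N + 1), (derivTransformCoeff k r t : ℂ) *
      (γ 1 0 : ℂ) ^ (r - t) * jZ γ z ^ (k + r + t) * iteratedDeriv t f z := by
  rw [iteratedDeriv_comp_actZ γ hf hmod r hz]
  refine sum_subset (range_subset_range.2 (by omega)) fun t _ ht => ?_
  simp [derivTransformCoeff_eq_zero_of_lt (show r < t by simpa using ht)]

lemma derivTransformCoeff_mul_derivTransformCoeff_eq_zero {k₁ k₂ n r t u : ℕ} (hr : r ≤ n)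
    (h : ¬(t ≤ r ∧ r + u ≤ n)) :
    derivTransformCoeff k₁ r t * derivTransformCoeff k₂ (n - r) u = 0 := by
  rcases lt_or_ge r t with h' | h'
  · simp [derivTransformCoeff_eq_zero_of_lt h']
  · simp [derivTransformCoeff_eq_zero_of_lt (show n - r < u by omega)]

lemma choose_mul_choose_mul_derivTransformCoeff {k₁ k₂ n r t u : ℕ} (hk₁ : 1 ≤ k₁)
    (hk₂ : 1 ≤ k₂) (htr : t ≤ r) (hru : r + u ≤ n) :
    (k₁ + n - 1).choose (n - r) * (k₂ + n - 1).choose r * derivTransformCoeff k₁ r t *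
        derivTransformCoeff k₂ (n - r) u =
      (k₁ + n - 1).choose (n - t) * (k₂ + n - 1).choose t * derivTransformCoeff k₂ (n - t) u *
        (n - t - u).choose (r - t) := by
  have e₁ := derivTransformCoeff_mul_factorial hk₁ htr
  have e₂ := derivTransformCoeff_mul_factorial (k := k₂) (r := n - r) (t := u) hk₂ (by omega)
  have e₃ := derivTransformCoeff_mul_factorial (k := k₂) (r := n - t) (t := u) hk₂ (by omega)
  have c₁ := Nat.choose_mul_factorial_mul_factorial (show n - r ≤ k₁ + n - 1 by omega)
  have c₂ := Nat.choose_mul_factorial_mul_factorial (show r ≤ k₂ + n - 1 by omega)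
  have c₃ := Nat.choose_mul_factorial_mul_factorial (show n - t ≤ k₁ + n - 1 by omega)
  have c₄ := Nat.choose_mul_factorial_mul_factorial (show t ≤ k₂ + n - 1 by omega)
  have c₅ := Nat.choose_mul_factorial_mul_factorial (show r - t ≤ n - t - u by omega)
  rw [show k₁ + n - 1 - (n - r) = k₁ + r - 1 by omega] at c₁
  rw [show k₂ + n - 1 - r = k₂ + (n - r) - 1 by omega] at c₂
  rw [show k₁ + n - 1 - (n - t) = k₁ + t - 1 by omega] at c₃
  rw [show k₂ + n - 1 - t = k₂ + (n - t) - 1 by omega] at c₄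
  rw [show n - t - u - (r - t) = n - r - u by omega] at c₅
  refine Nat.eq_of_mul_eq_mul_right (m := t.factorial * (r - t).factorial *
    (k₁ + t - 1).factorial * u.factorial * (n - r - u).factorial * (k₂ + u - 1).factorial)
    (by positivity) ?_
  calc _ = (k₁ + n - 1).choose (n - r) * (k₂ + n - 1).choose r *
        (derivTransformCoeff k₁ r t * (t.factorial * (r - t).factorial * (k₁ + t - 1).factorial)) *
        (derivTransformCoeff k₂ (n - r) u *
          (u.factorial * (n - r - u).factorial * (k₂ + u - 1).factorial)) := by ring
    _ = (k₁ + n - 1).factorial * (k₂ + n - 1).factorial := by rw [e₁, e₂, ← c₁, ← c₂]; ring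
    _ = (k₁ + n - 1).choose (n - t) * (k₂ + n - 1).choose t *
        (derivTransformCoeff k₂ (n - t) u *
          (u.factorial * (n - t - u).factorial * (k₂ + u - 1).factorial)) *
        t.factorial * (k₁ + t - 1).factorial := by rw [e₃, ← c₃, ← c₄]; ring
    _ = _ := by rw [← c₅]; ring

lemma sum_range_alternating_choose_sub (n t u : ℕ) :
    ∑ r ∈ range (n + 1),
      (if t ≤ r ∧ r + u ≤ n then (-1 : ℤ) ^ r * (n - t - u).choose (r - t) else 0) =
      if t + u = n then (-1) ^ t else 0 := by
  by_cases h : t + u ≤ n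
  · have hfilter : (range (n + 1)).filter (fun r => t ≤ r ∧ r + u ≤ n) = Ico t (n - u + 1) := by
      ext r
      simp only [mem_filter, mem_range, mem_Ico]
      omega
    rw [← sum_filter, hfilter, sum_Ico_eq_sum_range, show n - u + 1 - t = n - t - u + 1 by omega]
    simp only [pow_add, Nat.add_sub_cancel_left, mul_assoc, ← mul_sum,
      Int.alternating_sum_range_choose, show n - t - u = 0 ↔ t + u = n by omega, mul_ite,
      mul_one, mul_zero]
  · rw [sum_eq_zero fun r _ => if_neg (by omega), if_neg (by omega)]

def rcCoeff (k₁ k₂ n r : ℕ) : ℤ :=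
  (-1) ^ r * ((k₁ + n - 1).choose (n - r) * (k₂ + n - 1).choose r : ℕ)

lemma RC_eq_sum (k₁ k₂ n : ℕ) (g₁ g₂ : ℂ → ℂ) (z : ℂ) :
    RC k₁ k₂ n g₁ g₂ z = ∑ r ∈ range (n + 1),
      (rcCoeff k₁ k₂ n r : ℂ) * (iteratedDeriv r g₁ z * iteratedDeriv (n - r) g₂ z) := by
  refine sum_congr rfl fun r _ => ?_
  push_cast [rcCoeff]
  ring

theorem sum_rcCoeff_mul_derivTransformCoeff {k₁ k₂ : ℕ} (hk₁ : 1 ≤ k₁) (hk₂ : 1 ≤ k₂)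
    (n t u : ℕ) :
    ∑ r ∈ range (n + 1), rcCoeff k₁ k₂ n r *
        (derivTransformCoeff k₁ r t * derivTransformCoeff k₂ (n - r) u : ℕ) =
      if t + u = n then rcCoeff k₁ k₂ n t else 0 := by
  have hterm : ∀ r ∈ range (n + 1), rcCoeff k₁ k₂ n r *
      (derivTransformCoeff k₁ r t * derivTransformCoeff k₂ (n - r) u : ℕ) =
      ((k₁ + n - 1).choose (n - t) * (k₂ + n - 1).choose t * derivTransformCoeff k₂ (n - t) u :
        ℕ) * (if t ≤ r ∧ r + u ≤ n then (-1 : ℤ) ^ r * (n - t - u).choose (r - t) else 0) := by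
    intro r hr
    have hr : r ≤ n := Nat.lt_succ_iff.1 (mem_range.1 hr)
    split_ifs with h
    · have := congrArg (Nat.cast : ℕ → ℤ)
        (choose_mul_choose_mul_derivTransformCoeff hk₁ hk₂ h.1 h.2)
      push_cast [rcCoeff] at this ⊢
      linear_combination (-1 : ℤ) ^ r * this
    · rw [derivTransformCoeff_mul_derivTransformCoeff_eq_zero hr h]
      simp
  rw [sum_congr rfl hterm, ← mul_sum, sum_range_alternating_choose_sub]
  split_ifs with h
  · simp [rcCoeff, show n - t = u by omega]
    ring
  · simp

theorem RC_comp_actZ (γ : SL2Z) {k₁ k₂ : ℕ} (hk₁ : 1 ≤ k₁) (hk₂ : 1 ≤ k₂) (n : ℕ)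
    {g₁ g₂ : ℂ → ℂ} (hd₁ : DifferentiableOn ℂ g₁ {z | 0 < z.im})
    (hd₂ : DifferentiableOn ℂ g₂ {z | 0 < z.im}) (hmod₁ : IsWeaklyModular k₁ g₁)
    (hmod₂ : IsWeaklyModular k₂ g₂) {z : ℂ} (hz : 0 < z.im) :
    RC k₁ k₂ n g₁ g₂ (actZ γ z) = jZ γ z ^ (k₁ + k₂ + 2 * n) * RC k₁ k₂ n g₁ g₂ z := by
  set M : ℕ → ℕ → ℂ := fun t u => ((γ 1 0 : ℤ) : ℂ) ^ (n - t - u) *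
    jZ γ z ^ (k₁ + k₂ + n + t + u) * (iteratedDeriv t g₁ z * iteratedDeriv u g₂ z)
  have hexpand : ∀ r ∈ range (n + 1), (rcCoeff k₁ k₂ n r : ℂ) *
      (iteratedDeriv r g₁ (actZ γ z) * iteratedDeriv (n - r) g₂ (actZ γ z)) =
      ∑ t ∈ range (n + 1), ∑ u ∈ range (n + 1), ((rcCoeff k₁ k₂ n r *
        (derivTransformCoeff k₁ r t * derivTransformCoeff k₂ (n - r) u : ℕ) : ℤ) : ℂ) *
          M t u := by
    intro r hr
    have hr : r ≤ n := Nat.lt_succ_iff.1 (mem_range.1 hr)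
    rw [iteratedDeriv_comp_actZ_of_le γ hd₁ hmod₁ hr hz,
      iteratedDeriv_comp_actZ_of_le γ hd₂ hmod₂ (Nat.sub_le n r) hz, sum_mul_sum]
    simp only [mul_sum]
    refine sum_congr rfl fun t _ => sum_congr rfl fun u _ => ?_
    by_cases h : t ≤ r ∧ r + u ≤ n
    · simp only [M]
      rw [show n - t - u = (r - t) + (n - r - u) by omega,
        show k₁ + k₂ + n + t + u = (k₁ + r + t) + (k₂ + (n - r) + u) by omega]
      push_cast
      ring
    · rcases Nat.mul_eq_zero.1 (derivTransformCoeff_mul_derivTransformCoeff_eq_zero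
        (k₁ := k₁) (k₂ := k₂) hr h) with h0 | h0 <;> simp [h0]
  rw [RC_eq_sum, sum_congr rfl hexpand, sum_comm, RC_eq_sum, mul_sum]
  refine sum_congr rfl fun t ht => ?_
  have ht : t ≤ n := Nat.lt_succ_iff.1 (mem_range.1 ht)
  rw [sum_comm]
  simp only [← sum_mul, ← Int.cast_sum, sum_rcCoeff_mul_derivTransformCoeff hk₁ hk₂]
  rw [sum_eq_single_of_mem (n - t) (mem_range.2 (by omega)) fun u _ hu => by
    rw [if_neg (by omega), Int.cast_zero, zero_mul]]
  simp only [M, if_pos (Nat.add_sub_of_le ht), show n - t - (n - t) = 0 by omega,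
    show k₁ + k₂ + n + t + (n - t) = k₁ + k₂ + 2 * n by omega]
  ring

lemma norm_iteratedDeriv_le_of_forall_le_im {f : ℂ → ℂ}
    (hf : DifferentiableOn ℂ f {z | 0 < z.im}) {A C : ℝ} (hA : 0 < A)
    (hb : ∀ z : ℂ, A ≤ z.im → ‖f z‖ ≤ C) (r : ℕ) {z : ℂ} (hz : A < z.im) :
    ‖iteratedDeriv r f z‖ ≤ r.factorial * C / (z.im - A) ^ r := by
  have hball : Metric.closedBall z (z.im - A) ⊆ {w : ℂ | A ≤ w.im} := fun w hw => by
    have := (abs_le.1 ((abs_im_le_norm (w - z)).trans (mem_closedBall_iff_norm.1 hw))).1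
    simp only [sub_im] at this
    exact (by linarith : A ≤ w.im)
  exact Complex.norm_iteratedDeriv_le_of_forall_mem_sphere_norm_le r (by linarith)
    (hf.diffContOnCl_ball fun w hw => hA.trans_le (hball hw))
    fun w hw => hb w (hball (Metric.sphere_subset_closedBall hw))

lemma tendsto_iteratedDeriv_comap_im_atTop {f : ℂ → ℂ}
    (hf : DifferentiableOn ℂ f {z | 0 < z.im}) {A C : ℝ} (hb : ∀ z : ℂ, A ≤ z.im → ‖f z‖ ≤ C)
    {r : ℕ} (hr : r ≠ 0) : Tendsto (iteratedDeriv r f) (comap im atTop) (𝓝 0) := by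
  set A' := max A 1
  have hb' : ∀ z : ℂ, A' ≤ z.im → ‖f z‖ ≤ C := fun z hz => hb z ((le_max_left _ _).trans hz)
  have him : Tendsto im (comap im atTop) atTop := tendsto_comap
  have hbound : Tendsto (fun y : ℝ => r.factorial * C / (y - A') ^ r) atTop (𝓝 0) :=
    tendsto_const_nhds.div_atTop
      ((tendsto_pow_atTop hr).comp (tendsto_atTop_add_const_right _ (-A') tendsto_id))
  refine squeeze_zero_norm' ?_ (hbound.comp him)
  filter_upwards [him.eventually_gt_atTop A'] with z hz
  exact norm_iteratedDeriv_le_of_forall_le_im hf (by positivity) hb' r hz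

lemma isBoundedUnder_iteratedDeriv_comap_im_atTop {f : ℂ → ℂ}
    (hf : DifferentiableOn ℂ f {z | 0 < z.im}) {A C : ℝ} (hb : ∀ z : ℂ, A ≤ z.im → ‖f z‖ ≤ C)
    (r : ℕ) : IsBoundedUnder (· ≤ ·) (comap im atTop) (norm ∘ iteratedDeriv r f) := by
  rcases eq_or_ne r 0 with rfl | hr
  · refine ⟨C, eventually_map.2 ?_⟩
    filter_upwards [tendsto_comap.eventually_ge_atTop A] with z hz
    simpa using hb z hz
  · exact (tendsto_iteratedDeriv_comap_im_atTop hf hb hr).norm.isBoundedUnder_le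

lemma tendsto_RC_comap_im_atTop (k₁ k₂ : ℕ) {n : ℕ} (hn : n ≠ 0) {g₁ g₂ : ℂ → ℂ}
    (hd₁ : DifferentiableOn ℂ g₁ {z | 0 < z.im}) (hd₂ : DifferentiableOn ℂ g₂ {z | 0 < z.im})
    {A₁ C₁ A₂ C₂ : ℝ} (hb₁ : ∀ z : ℂ, A₁ ≤ z.im → ‖g₁ z‖ ≤ C₁)
    (hb₂ : ∀ z : ℂ, A₂ ≤ z.im → ‖g₂ z‖ ≤ C₂) :
    Tendsto (RC k₁ k₂ n g₁ g₂) (comap im atTop) (𝓝 0) := by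
  simp only [funext (RC_eq_sum k₁ k₂ n g₁ g₂)]
  rw [← sum_const_zero (s := range (n + 1))]
  refine tendsto_finsetSum _ fun r _ => ?_
  rw [← mul_zero (rcCoeff k₁ k₂ n r : ℂ)]
  refine Tendsto.const_mul _ ?_
  rcases eq_or_ne r 0 with rfl | hr
  · exact isBoundedUnder_le_mul_tendsto_zero
      (isBoundedUnder_iteratedDeriv_comap_im_atTop hd₁ hb₁ 0)
      (tendsto_iteratedDeriv_comap_im_atTop hd₂ hb₂ hn)
  · exact (tendsto_iteratedDeriv_comap_im_atTop hd₁ hb₁ hr).zero_mul_isBoundedUnder_le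
      (isBoundedUnder_iteratedDeriv_comap_im_atTop hd₂ hb₂ (n - r))

lemma differentiableOn_RC (k₁ k₂ n : ℕ) {g₁ g₂ : ℂ → ℂ}
    (hd₁ : DifferentiableOn ℂ g₁ {z | 0 < z.im}) (hd₂ : DifferentiableOn ℂ g₂ {z | 0 < z.im}) :
    DifferentiableOn ℂ (RC k₁ k₂ n g₁ g₂) {z | 0 < z.im} := by
  have hH := UpperHalfPlane.isOpen_upperHalfPlaneSet
  simp only [funext (RC_eq_sum k₁ k₂ n g₁ g₂)]
  exact DifferentiableOn.fun_sum fun r _ => DifferentiableOn.const_mul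
    ((hd₁.iteratedDeriv_of_isOpen hH r).mul (hd₂.iteratedDeriv_of_isOpen hH (n - r))) _

theorem statement14_general (k₁ k₂ : ℕ) (h₁ : 4 ≤ k₁) (h₂ : 4 ≤ k₂)
    (n : ℕ) (hn : 1 ≤ n) (g₁ g₂ : ℂ → ℂ)
    (hg₁ : IsModularForm (k₁ : ℤ) g₁) (hg₂ : IsModularForm (k₂ : ℤ) g₂) :
    IsCuspForm ((k₁ : ℤ) + k₂ + 2 * n) (RC k₁ k₂ n g₁ g₂) := by
  obtain ⟨hd₁, hmod₁, C₁, A₁, hb₁⟩ := hg₁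
  obtain ⟨hd₂, hmod₂, C₂, A₂, hb₂⟩ := hg₂
  refine ⟨differentiableOn_RC k₁ k₂ n hd₁ hd₂, fun γ z hz => ?_,
    tendsto_RC_comap_im_atTop k₁ k₂ (by omega) hd₁ hd₂ hb₁ hb₂⟩
  rw [RC_comp_actZ γ (by omega) (by omega) n hd₁ hd₂ hmod₁ hmod₂ hz]
  norm_cast

/-- the Rankin–Cohen bracket of two modular forms of weights `k₁, k₂` is a
cusp form of weight `k₁+k₂+2n` for `n ≥ 1`. -/
theorem statement14 (k₁ k₂ : ℕ) (h₁ : 4 ≤ k₁) (h₂ : 4 ≤ k₂) (he₁ : Even k₁) (he₂ : Even k₂)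
    (n : ℕ) (hn : 1 ≤ n) (g₁ g₂ : ℂ → ℂ)
    (hg₁ : IsModularForm (k₁ : ℤ) g₁) (hg₂ : IsModularForm (k₂ : ℤ) g₂) :
    IsCuspForm ((k₁ : ℤ) + k₂ + 2 * n) (RC k₁ k₂ n g₁ g₂) :=
  statement14_general k₁ k₂ h₁ h₂ n hn g₁ g₂ hg₁ hg₂
end
end

section
/- Let k₁, k₂ ≥ 3 be integers, let m₁, m₂ ∈ ℤ≥0, and let w ∈ ℂ with Re(w) < k₁−1 and Re(w) < k₂−1. Then the double Poincaré series P_{k₁,k₂}(z,w;m₁,m₂) converges absolutely, uniformly on compacta, and as a function of z is a holomorphic cusp form of weight k₁+k₂ for SL(2,ℤ). -/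
noncomputable section

open Complex Filter MeasureTheory

/-!
Every term of the double sum is bounded, for any exponent `A ≥ max (Re w - 1) 0`, by
`(Im z)^(-A) |j(γ,z)|^(A-k₁) |j(δ,z)|^(A-k₂)`: the exponential has modulus at most one on the
upper half-plane, and `c_{γδ⁻¹} Im z = Im (j(γ,z) conj j(δ,z)) ≤ |j(γ,z)| |j(δ,z)|`.
On a vertical strip `|cz+d| ≥ r max(|c|,|d|)` with a uniform `r > 0` (the estimate behind the
convergence of Eisenstein series), so any `0 < A < min k₁ k₂ - 2` yields a majorant that is
summable and uniform on strips. The factor `(Im z)^(-A)` then gives the decay at the cusp once `z`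
is translated into `|Re z| ≤ 1/2`. Modularity follows by reindexing the double sum by right
multiplication with `γ`, which preserves `c_{γδ⁻¹}` and shifts both Möbius arguments by integers.
-/

namespace DoublePoincare

open scoped UpperHalfPlane ComplexConjugate
open UpperHalfPlane (verticalStrip isEmbedding_coe range_coe
  subset_verticalStrip_of_isCompact)
open EisensteinSeries

lemma ne_zero_of_isCoprime {p : ℤ × ℤ} (h : IsCoprime p.1 p.2) : p ≠ 0 := by
  rintro rfl
  exact not_isCoprime_zero_zero h

lemma det_SL2Z (γ : SL2Z) : γ 0 0 * γ 1 1 - γ 0 1 * γ 1 0 = 1 := by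
  rw [← Matrix.det_fin_two]; exact γ.2

def rowMul (p : ℤ × ℤ) (γ : SL2Z) : ℤ × ℤ :=
  (p.1 * γ 0 0 + p.2 * γ 1 0, p.1 * γ 0 1 + p.2 * γ 1 1)

lemma rowMul_mul (p : ℤ × ℤ) (γ δ : SL2Z) : rowMul p (γ * δ) = rowMul (rowMul p γ) δ := by
  simp only [rowMul, Matrix.SpecialLinearGroup.coe_mul, Matrix.mul_apply, Fin.sum_univ_two]
  ext <;> ring

@[simp] lemma rowMul_one (p : ℤ × ℤ) : rowMul p 1 = p := by
  simp [rowMul]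

lemma isCoprime_rowMul {p : ℤ × ℤ} (h : IsCoprime p.1 p.2) (γ : SL2Z) :
    IsCoprime (rowMul p γ).1 (rowMul p γ).2 := by
  obtain ⟨A, B, hAB⟩ := h
  exact ⟨A * γ 1 1 - B * γ 0 1, B * γ 0 0 - A * γ 1 0, by
    simp only [rowMul]; linear_combination (A * p.1 + B * p.2) * det_SL2Z γ + hAB⟩

lemma crossP_rowMul (p q : ℤ × ℤ) (γ : SL2Z) :
    crossP (rowMul p γ) (rowMul q γ) = crossP p q := by
  simp only [crossP, rowMul]
  linear_combination (p.1 * q.2 - p.2 * q.1) * det_SL2Z γ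

def cpEquiv (γ : SL2Z) : CP ≃ CP where
  toFun p := ⟨rowMul p.1 γ, isCoprime_rowMul p.2 γ⟩
  invFun p := ⟨rowMul p.1 γ⁻¹, isCoprime_rowMul p.2 γ⁻¹⟩
  left_inv p := Subtype.ext <| by simp [← rowMul_mul]
  right_inv p := Subtype.ext <| by simp [← rowMul_mul]

lemma jP_rowMul (p : ℤ × ℤ) (γ : SL2Z) {z : ℂ} (hγz : jZ γ z ≠ 0) :
    jP (rowMul p γ) z = jP p (actZ γ z) * jZ γ z := by
  simp only [jP, actZ, rowMul]
  field_simp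
  simp only [jZ]
  push_cast
  ring

lemma norm_finTwo_eq_norm (p : ℤ × ℤ) : ‖![p.1, p.2]‖ = ‖p‖ := by
  simp [EisensteinSeries.norm_eq_max_natAbs, Prod.norm_def, Int.norm_eq_abs]

lemma r_mul_norm_le_norm_jP (z : ℍ) {p : ℤ × ℤ} (hp : p ≠ 0) : r z * ‖p‖ ≤ ‖jP p z‖ := by
  have hx : ![p.1, p.2] ≠ 0 := fun h => hp (Prod.ext (congrFun h 0) (congrFun h 1))
  simpa [norm_finTwo_eq_norm, jP] using r_mul_max_le z hx

lemma jP_ne_zero {p : ℤ × ℤ} (hp : p ≠ 0) {z : ℂ} (hz : 0 < z.im) : jP p z ≠ 0 :=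
  norm_pos_iff.mp <| (mul_pos (r_pos _) (norm_pos_iff.mpr hp)).trans_le
    (r_mul_norm_le_norm_jP ⟨z, hz⟩ hp)

lemma jZ_ne_zero (γ : SL2Z) {z : ℂ} (hz : 0 < z.im) : jZ γ z ≠ 0 :=
  jP_ne_zero (p := (γ 1 0, γ 1 1))
    (ne_zero_of_isCoprime ⟨-γ 0 1, γ 0 0, by linear_combination det_SL2Z γ⟩) hz

lemma norm_jP_rpow_le_of_mem_verticalStrip {a b : ℝ} (hb : 0 < b) {z : ℍ}
    (hz : z ∈ verticalStrip a b) {p : ℤ × ℤ} (hp : p ≠ 0) {e : ℝ} (he : e ≤ 0) :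
    ‖jP p z‖ ^ e ≤ (r ⟨⟨a, b⟩, hb⟩ * ‖p‖) ^ e :=
  Real.rpow_le_rpow_of_nonpos (mul_pos (r_pos _) (norm_pos_iff.mpr hp))
    ((mul_le_mul_of_nonneg_right (r_lower_bound_on_verticalStrip z hb hz) (norm_nonneg p)).trans
      (r_mul_norm_le_norm_jP z hp)) he

lemma summable_norm_rpow {e : ℝ} (he : e < -2) : Summable fun p : ℤ × ℤ => ‖p‖ ^ e := by
  have := summable_one_div_norm_rpow (k := -e) (by linarith)
  rw [← (finTwoArrowEquiv ℤ).symm.summable_iff] at this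
  exact this.congr fun p => by simp [norm_finTwo_eq_norm]

/-- On a vertical strip, `ρ` plays the role of the constant `r` with `ρ ‖p‖ ≤ |jP p z|`. -/
def majorant (k₁ k₂ : ℤ) (A ρ : ℝ) (pq : CP × CP) : ℝ :=
  (ρ * ‖pq.1.1‖) ^ (A - k₁) * (ρ * ‖pq.2.1‖) ^ (A - k₂)

lemma majorant_nonneg (k₁ k₂ : ℤ) {A ρ : ℝ} (hρ : 0 ≤ ρ) (pq : CP × CP) :
    0 ≤ majorant k₁ k₂ A ρ pq := by
  unfold majorant
  positivity

lemma summable_majorant {k₁ k₂ : ℤ} {A ρ : ℝ} (hρ : 0 ≤ ρ) (hAk₁ : A - k₁ < -2)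
    (hAk₂ : A - k₂ < -2) : Summable (majorant k₁ k₂ A ρ) := by
  have h : ∀ {e : ℝ}, e < -2 → Summable fun p : CP => (ρ * ‖p.1‖) ^ e := fun he =>
    (((summable_norm_rpow he).mul_left _).congr fun p =>
      (Real.mul_rpow hρ (norm_nonneg p)).symm).subtype {p : ℤ × ℤ | IsCoprime p.1 p.2}
  exact (h hAk₁).mul_of_nonneg (h hAk₂) (fun _ => by positivity) (fun _ => by positivity)

lemma im_mobiusP {p : ℤ × ℤ} (h : IsCoprime p.1 p.2) (z : ℂ) :
    (mobiusP p h z).im = z.im / normSq (jP p z) := by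
  have hAB : (h.choose : ℝ) * p.1 + h.choose_spec.choose * p.2 = 1 := by
    exact_mod_cast h.choose_spec.choose_spec
  rw [mobiusP, Complex.div_im, ← sub_div]
  congr 1
  simp only [jP, add_im, add_re, sub_im, sub_re, mul_im, mul_re, intCast_re, intCast_im]
  linear_combination z.im * hAB

lemma exists_mobiusP_eq_add_int {p : ℤ × ℤ} (h : IsCoprime p.1 p.2) {A B : ℤ}
    (hAB : A * p.1 + B * p.2 = 1) {z : ℂ} (hz : jP p z ≠ 0) :
    ∃ n : ℤ, mobiusP p h z = (B * z - A) / jP p z + n := by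
  set A' := h.choose
  set B' := h.choose_spec.choose
  have e : (A : ℂ) * p.1 + B * p.2 = 1 := by exact_mod_cast hAB
  have e' : (A' : ℂ) * p.1 + B' * p.2 = 1 := by exact_mod_cast h.choose_spec.choose_spec
  -- two Bézout pairs of `p` differ by `n • (-p.2, p.1)`
  refine ⟨(B' - B) * A - (A' - A) * B, ?_⟩
  rw [mobiusP, div_add' _ _ _ hz, div_left_inj' hz]
  simp only [jP]
  push_cast
  linear_combination (A' - B' * z) * e + (B * z - A) * e'

lemma exists_mobiusP_rowMul_eq_add_int {p : ℤ × ℤ} (h : IsCoprime p.1 p.2) (γ : SL2Z)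
    {z : ℂ} (hz : 0 < z.im) :
    ∃ n : ℤ, mobiusP (rowMul p γ) (isCoprime_rowMul h γ) z = mobiusP p h (actZ γ z) + n := by
  have hγ := jZ_ne_zero γ hz
  have hj := jP_ne_zero (ne_zero_of_isCoprime (isCoprime_rowMul h γ)) hz
  set A := h.choose
  set B := h.choose_spec.choose
  have hAB : A * p.1 + B * p.2 = 1 := h.choose_spec.choose_spec
  -- the Bézout pair read off the top row of `(B, -A; p.1, p.2) * γ`
  have hAB' : (A * γ 1 1 - B * γ 0 1) * (rowMul p γ).1
      + (B * γ 0 0 - A * γ 1 0) * (rowMul p γ).2 = 1 := by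
    simp only [rowMul]; linear_combination (A * p.1 + B * p.2) * det_SL2Z γ + hAB
  obtain ⟨n, hn⟩ := exists_mobiusP_eq_add_int (isCoprime_rowMul h γ) hAB' hj
  have hnum : ((B * γ 0 0 - A * γ 1 0 : ℤ) : ℂ) * z - ((A * γ 1 1 - B * γ 0 1 : ℤ) : ℂ)
      = (B * actZ γ z - A) * jZ γ z := by
    rw [sub_mul, mul_assoc, actZ, div_mul_cancel₀ _ hγ]
    simp only [jZ]
    push_cast
    ring
  refine ⟨n, ?_⟩
  rw [hn, jP_rowMul p γ hγ, hnum, mul_div_mul_right _ _ hγ]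
  rfl

lemma exists_mobiusCP_cpEquiv_eq_add_int (γ : SL2Z) (p : CP) {z : ℂ} (hz : 0 < z.im) :
    ∃ n : ℤ, mobiusCP (cpEquiv γ p) z = mobiusCP p (actZ γ z) + n :=
  exists_mobiusP_rowMul_eq_add_int p.2 γ hz

section Modularity

variable (k₁ k₂ : ℤ) (w : ℂ) (m₁ m₂ : ℕ)

lemma dblPoinTerm_actZ (γ : SL2Z) {z : ℂ} (hz : 0 < z.im) (pq : CP × CP) :
    dblPoinTerm k₁ k₂ w m₁ m₂ (actZ γ z) pq
      = jZ γ z ^ (k₁ + k₂) * dblPoinTerm k₁ k₂ w m₁ m₂ z (cpEquiv γ pq.1, cpEquiv γ pq.2) := by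
  have hγ := jZ_ne_zero γ hz
  obtain ⟨n₁, hn₁⟩ := exists_mobiusCP_cpEquiv_eq_add_int γ pq.1 hz
  obtain ⟨n₂, hn₂⟩ := exists_mobiusCP_cpEquiv_eq_add_int γ pq.2 hz
  have hexp : cexp (2 * Real.pi * I *
        (m₁ * mobiusCP (cpEquiv γ pq.1) z + m₂ * mobiusCP (cpEquiv γ pq.2) z))
      = cexp (2 * Real.pi * I *
        (m₁ * mobiusCP pq.1 (actZ γ z) + m₂ * mobiusCP pq.2 (actZ γ z))) := by
    rw [hn₁, hn₂]
    convert Complex.exp_periodic.int_mul (m₁ * n₁ + m₂ * n₂) _ using 2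
    push_cast
    ring
  simp only [dblPoinTerm, hexp]
  simp only [show ∀ p : CP, (cpEquiv γ p).1 = rowMul p.1 γ from fun _ => rfl,
    crossP_rowMul, jP_rowMul _ γ hγ]
  split_ifs
  · simp only [mul_zpow, zpow_add₀ hγ, zpow_neg]
    field_simp
  · rw [mul_zero]

lemma dblPoin_actZ (γ : SL2Z) {z : ℂ} (hz : 0 < z.im) :
    dblPoin k₁ k₂ w m₁ m₂ (actZ γ z) = jZ γ z ^ (k₁ + k₂) * dblPoin k₁ k₂ w m₁ m₂ z := by
  simp only [dblPoin, dblPoinTerm_actZ k₁ k₂ w m₁ m₂ γ hz, tsum_mul_left]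
  congr 1
  exact ((cpEquiv γ).prodCongr (cpEquiv γ)).tsum_eq (dblPoinTerm k₁ k₂ w m₁ m₂ z)

lemma dblPoin_add_intCast {z : ℂ} (hz : 0 < z.im) (n : ℤ) :
    dblPoin k₁ k₂ w m₁ m₂ (z + n) = dblPoin k₁ k₂ w m₁ m₂ z := by
  simpa [actZ, jZ, ModularGroup.coe_T_zpow] using
    dblPoin_actZ k₁ k₂ w m₁ m₂ (ModularGroup.T ^ n) hz

end Modularity

lemma norm_cexp_two_pi_I_mul_le_one {τ : ℂ} (hτ : 0 ≤ τ.im) :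
    ‖cexp (2 * Real.pi * I * τ)‖ ≤ 1 := by
  rw [Complex.norm_exp, Real.exp_le_one_iff]
  simp only [mul_re, mul_im, ofReal_re, ofReal_im, I_re, I_im, re_ofNat, im_ofNat]
  nlinarith [Real.pi_pos]

lemma crossP_mul_im_le (p q : ℤ × ℤ) (z : ℂ) :
    (crossP p q : ℝ) * z.im ≤ ‖jP p z‖ * ‖jP q z‖ := by
  have him : (jP p z * conj (jP q z)).im = (crossP p q : ℝ) * z.im := by
    simp only [jP, crossP, mul_im, add_re, add_im, mul_re, conj_re, conj_im, intCast_re,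
      intCast_im, map_add, map_mul]
    push_cast
    ring
  calc (crossP p q : ℝ) * z.im = (jP p z * conj (jP q z)).im := him.symm
    _ ≤ ‖jP p z * conj (jP q z)‖ := (le_abs_self _).trans (abs_im_le_norm _)
    _ = ‖jP p z‖ * ‖jP q z‖ := by rw [norm_mul, Complex.norm_conj]

section Estimates

variable (k₁ k₂ : ℤ) {w : ℂ} (m₁ m₂ : ℕ) {A : ℝ}

lemma norm_dblPoinTerm_le (hA : 0 ≤ A) (hwA : w.re - 1 ≤ A) {z : ℂ} (hz : 0 < z.im)
    (pq : CP × CP) :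
    ‖dblPoinTerm k₁ k₂ w m₁ m₂ z pq‖
      ≤ z.im ^ (-A) * (‖jP pq.1.1 z‖ ^ (A - k₁) * ‖jP pq.2.1 z‖ ^ (A - k₂)) := by
  have hj₁ := norm_pos_iff.mpr (jP_ne_zero (ne_zero_of_isCoprime pq.1.2) hz)
  have hj₂ := norm_pos_iff.mpr (jP_ne_zero (ne_zero_of_isCoprime pq.2.2) hz)
  rw [dblPoinTerm]
  split_ifs with hc
  swap
  · rw [norm_zero]; positivity
  have hc₁ : (1 : ℝ) ≤ crossP pq.1.1 pq.2.1 := by exact_mod_cast hc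
  have hcross : ‖((crossP pq.1.1 pq.2.1 : ℤ) : ℂ) ^ (w - 1)‖
      ≤ (‖jP pq.1.1 z‖ * ‖jP pq.2.1 z‖ / z.im) ^ A := by
    rw [← ofReal_intCast, norm_cpow_eq_rpow_re_of_pos (by linarith), sub_re, one_re]
    calc _ ≤ (crossP pq.1.1 pq.2.1 : ℝ) ^ A := Real.rpow_le_rpow_of_exponent_le hc₁ hwA
      _ ≤ _ := Real.rpow_le_rpow (by linarith)
          ((le_div_iff₀ hz).mpr (crossP_mul_im_le _ _ z)) hA
  have hexp : ‖cexp (2 * Real.pi * I * (m₁ * mobiusCP pq.1 z + m₂ * mobiusCP pq.2 z))‖ ≤ 1 := by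
    refine norm_cexp_two_pi_I_mul_le_one ?_
    simp only [mobiusCP, add_im, mul_im, natCast_re, natCast_im, zero_mul, add_zero, im_mobiusP]
    have hq : ∀ p : ℤ × ℤ, 0 ≤ z.im / normSq (jP p z) := fun p =>
      div_nonneg hz.le (normSq_nonneg _)
    exact add_nonneg (mul_nonneg m₁.cast_nonneg (hq _)) (mul_nonneg m₂.cast_nonneg (hq _))
  simp only [norm_mul, norm_zpow, ← Real.rpow_intCast, Int.cast_neg]
  calc _ ≤ (‖jP pq.1.1 z‖ * ‖jP pq.2.1 z‖ / z.im) ^ A * 1 *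
        ‖jP pq.1.1 z‖ ^ (-k₁ : ℝ) * ‖jP pq.2.1 z‖ ^ (-k₂ : ℝ) := by gcongr
    _ = _ := by
      rw [Real.div_rpow (by positivity) hz.le, Real.mul_rpow hj₁.le hj₂.le, Real.rpow_neg hz.le,
        sub_eq_add_neg, sub_eq_add_neg, Real.rpow_add hj₁, Real.rpow_add hj₂]
      ring

lemma norm_dblPoinTerm_le_of_mem_verticalStrip (hA : 0 ≤ A) (hwA : w.re - 1 ≤ A)
    (hAk₁ : A ≤ k₁) (hAk₂ : A ≤ k₂) {a b : ℝ} (hb : 0 < b) {z : ℍ} (hz : z ∈ verticalStrip a b)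
    (pq : CP × CP) :
    ‖dblPoinTerm k₁ k₂ w m₁ m₂ z pq‖ ≤ z.im ^ (-A) * majorant k₁ k₂ A (r ⟨⟨a, b⟩, hb⟩) pq :=
  (norm_dblPoinTerm_le k₁ k₂ m₁ m₂ hA hwA z.im_pos pq).trans <| mul_le_mul_of_nonneg_left
    (mul_le_mul
      (norm_jP_rpow_le_of_mem_verticalStrip hb hz (ne_zero_of_isCoprime pq.1.2) (by linarith))
      (norm_jP_rpow_le_of_mem_verticalStrip hb hz (ne_zero_of_isCoprime pq.2.2) (by linarith))
      (by positivity) (Real.rpow_nonneg (mul_nonneg (r_pos _).le (norm_nonneg _)) _))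
    (Real.rpow_nonneg z.im_pos.le _)

lemma differentiableOn_dblPoinTerm (pq : CP × CP) :
    DifferentiableOn ℂ (fun z => dblPoinTerm k₁ k₂ w m₁ m₂ z pq) {z : ℂ | 0 < z.im} := by
  intro z hz
  have hj₁ := jP_ne_zero (ne_zero_of_isCoprime pq.1.2) hz
  have hj₂ := jP_ne_zero (ne_zero_of_isCoprime pq.2.2) hz
  refine DifferentiableAt.differentiableWithinAt ?_
  unfold dblPoinTerm mobiusCP mobiusP jP at *
  split_ifs
  · fun_prop (disch := first | assumption | exact Or.inl ‹_›)
  · fun_prop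

lemma summable_norm_dblPoinTerm (hA : 0 ≤ A) (hwA : w.re - 1 ≤ A) (hAk₁ : A - k₁ < -2)
    (hAk₂ : A - k₂ < -2) (z : ℍ) :
    Summable fun pq : CP × CP => ‖dblPoinTerm k₁ k₂ w m₁ m₂ z pq‖ :=
  ((summable_majorant (r_pos _).le hAk₁ hAk₂).mul_left _).of_nonneg_of_le (fun _ => norm_nonneg _)
    (norm_dblPoinTerm_le_of_mem_verticalStrip k₁ k₂ m₁ m₂ hA hwA (by linarith) (by linarith)
      z.im_pos (z := z) ⟨le_rfl, le_rfl⟩)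

lemma tendstoUniformlyOn_dblPoin (hA : 0 ≤ A) (hwA : w.re - 1 ≤ A) (hAk₁ : A - k₁ < -2)
    (hAk₂ : A - k₂ < -2) {a b : ℝ} (hb : 0 < b) :
    TendstoUniformlyOn
      (fun (F : Finset (CP × CP)) z => ∑ pq ∈ F, dblPoinTerm k₁ k₂ w m₁ m₂ z pq)
      (dblPoin k₁ k₂ w m₁ m₂) atTop (((↑) : ℍ → ℂ) '' verticalStrip a b) := by
  refine tendstoUniformlyOn_tsum
    ((summable_majorant (r_pos ⟨⟨a, b⟩, hb⟩).le hAk₁ hAk₂).mul_left (b ^ (-A))) ?_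
  rintro pq _ ⟨z, hz, rfl⟩
  exact (norm_dblPoinTerm_le_of_mem_verticalStrip k₁ k₂ m₁ m₂ hA hwA (by linarith) (by linarith)
    hb hz pq).trans (mul_le_mul_of_nonneg_right
      (Real.rpow_le_rpow_of_nonpos hb hz.2 (neg_nonpos.2 hA)) (majorant_nonneg _ _ (r_pos _).le _))

lemma tendstoUniformlyOn_dblPoin_of_isCompact (hA : 0 ≤ A) (hwA : w.re - 1 ≤ A)
    (hAk₁ : A - k₁ < -2) (hAk₂ : A - k₂ < -2) {K : Set ℂ} (hK : K ⊆ {z : ℂ | 0 < z.im})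
    (hKc : IsCompact K) :
    TendstoUniformlyOn
      (fun (F : Finset (CP × CP)) z => ∑ pq ∈ F, dblPoinTerm k₁ k₂ w m₁ m₂ z pq)
      (dblPoin k₁ k₂ w m₁ m₂) atTop K := by
  obtain ⟨a, b, hb, hab⟩ := subset_verticalStrip_of_isCompact <|
    isEmbedding_coe.isInducing.isCompact_preimage' hKc (by rwa [range_coe])
  exact (tendstoUniformlyOn_dblPoin k₁ k₂ m₁ m₂ hA hwA hAk₁ hAk₂ hb).mono
    fun z hz => ⟨⟨z, hK hz⟩, hab hz, rfl⟩

lemma differentiableOn_dblPoin (hA : 0 ≤ A) (hwA : w.re - 1 ≤ A) (hAk₁ : A - k₁ < -2)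
    (hAk₂ : A - k₂ < -2) :
    DifferentiableOn ℂ (dblPoin k₁ k₂ w m₁ m₂) {z : ℂ | 0 < z.im} := by
  have hU : IsOpen {z : ℂ | 0 < z.im} := isOpen_lt continuous_const continuous_im
  have hloc : TendstoLocallyUniformlyOn
      (fun (F : Finset (CP × CP)) z => ∑ pq ∈ F, dblPoinTerm k₁ k₂ w m₁ m₂ z pq)
      (dblPoin k₁ k₂ w m₁ m₂) atTop {z : ℂ | 0 < z.im} :=
    (tendstoLocallyUniformlyOn_iff_forall_isCompact hU).2 fun K hK hKc =>
      tendstoUniformlyOn_dblPoin_of_isCompact k₁ k₂ m₁ m₂ hA hwA hAk₁ hAk₂ hK hKc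
  exact hloc.differentiableOn (.of_forall fun F =>
    DifferentiableOn.fun_sum fun pq _ => differentiableOn_dblPoinTerm k₁ k₂ m₁ m₂ pq) hU

lemma exists_norm_dblPoin_le (hA : 0 ≤ A) (hwA : w.re - 1 ≤ A) (hAk₁ : A - k₁ < -2)
    (hAk₂ : A - k₂ < -2) :
    ∃ C : ℝ, ∀ z : ℂ, 1 ≤ z.im → ‖dblPoin k₁ k₂ w m₁ m₂ z‖ ≤ C * z.im ^ (-A) := by
  set M := majorant k₁ k₂ A (r ⟨⟨1 / 2, 1⟩, one_pos⟩)
  refine ⟨∑' pq, M pq, fun z hz => ?_⟩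
  have hz₀ : 0 < z.im := one_pos.trans_le hz
  set z' : ℍ := ⟨z + (-round z.re : ℤ), by simpa using hz₀⟩
  have hre : |z'.re| ≤ 1 / 2 := by
    simpa [z', ← sub_eq_add_neg] using abs_sub_round z.re
  have him : z'.im = z.im := by simp [z']
  have hsum := summable_norm_dblPoinTerm k₁ k₂ m₁ m₂ hA hwA hAk₁ hAk₂ z'
  rw [← dblPoin_add_intCast k₁ k₂ w m₁ m₂ hz₀ (-round z.re)]
  calc ‖dblPoin k₁ k₂ w m₁ m₂ z'‖ ≤ ∑' pq, ‖dblPoinTerm k₁ k₂ w m₁ m₂ z' pq‖ :=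
        norm_tsum_le_tsum_norm hsum
    _ ≤ ∑' pq, z'.im ^ (-A) * M pq :=
        hsum.tsum_le_tsum (norm_dblPoinTerm_le_of_mem_verticalStrip k₁ k₂ m₁ m₂ hA hwA
          (by linarith) (by linarith) one_pos ⟨hre, him ▸ hz⟩)
          ((summable_majorant (r_pos _).le hAk₁ hAk₂).mul_left _)
    _ = _ := by rw [tsum_mul_left, him, mul_comm]

lemma tendsto_dblPoin_comap_im_atTop (hA : 0 < A) (hwA : w.re - 1 ≤ A) (hAk₁ : A - k₁ < -2)
    (hAk₂ : A - k₂ < -2) :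
    Tendsto (dblPoin k₁ k₂ w m₁ m₂) (comap Complex.im atTop) (nhds 0) := by
  obtain ⟨C, hC⟩ := exists_norm_dblPoin_le k₁ k₂ m₁ m₂ hA.le hwA hAk₁ hAk₂
  refine squeeze_zero_norm' ((tendsto_comap.eventually (eventually_ge_atTop 1)).mono hC) ?_
  simpa [Function.comp_def] using ((tendsto_rpow_neg_atTop hA).const_mul C).comp tendsto_comap

end Estimates

end DoublePoincare

open DoublePoincare

/-- the double Poincaré series `P_{k₁,k₂}(z,w;m₁,m₂)` converges absolutely,
uniformly on compacta, and is a holomorphic cusp form of weight `k₁+k₂` in `z`. -/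
theorem statement15 (k₁ k₂ : ℤ) (h₁ : 3 ≤ k₁) (h₂ : 3 ≤ k₂) (m₁ m₂ : ℕ) (w : ℂ)
    (hw₁ : w.re < (k₁ : ℝ) - 1) (hw₂ : w.re < (k₂ : ℝ) - 1) :
    (∀ z : ℂ, 0 < z.im → Summable fun pq : CP × CP => ‖dblPoinTerm k₁ k₂ w m₁ m₂ z pq‖) ∧
    (∀ K : Set ℂ, K ⊆ {z : ℂ | 0 < z.im} → IsCompact K →
      TendstoUniformlyOn
        (fun (F : Finset (CP × CP)) (z : ℂ) => ∑ pq ∈ F, dblPoinTerm k₁ k₂ w m₁ m₂ z pq)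
        (dblPoin k₁ k₂ w m₁ m₂) atTop K) ∧
    DifferentiableOn ℂ (dblPoin k₁ k₂ w m₁ m₂) {z : ℂ | 0 < z.im} ∧
    (∀ γ : SL2Z, ∀ z : ℂ, 0 < z.im →
      dblPoin k₁ k₂ w m₁ m₂ (actZ γ z) = jZ γ z ^ (k₁ + k₂) * dblPoin k₁ k₂ w m₁ m₂ z) ∧
    Tendsto (dblPoin k₁ k₂ w m₁ m₂) (comap Complex.im atTop) (nhds 0) := by
  have h₁' : (3 : ℝ) ≤ k₁ := by exact_mod_cast h₁
  have h₂' : (3 : ℝ) ≤ k₂ := by exact_mod_cast h₂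
  -- a single exponent `A` serves for every part: `A ≥ Re w - 1` bounds `c_{γδ⁻¹}^{w-1}`,
  -- `A < k - 2` keeps the majorant summable and `A > 0` gives the decay at the cusp
  obtain ⟨A, hlo, hhi⟩ : ∃ A, max (w.re - 1) 0 < A ∧ A < min (k₁ : ℝ) k₂ - 2 :=
    exists_between <| max_lt (lt_sub_iff_add_lt.2 (lt_min (by linarith) (by linarith)))
      (lt_sub_iff_add_lt.2 (lt_min (by linarith) (by linarith)))
  obtain ⟨hwA, hA⟩ := max_lt_iff.1 hlo
  have hAk₁ : A - k₁ < -2 := by linarith [min_le_left (k₁ : ℝ) k₂]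
  have hAk₂ : A - k₂ < -2 := by linarith [min_le_right (k₁ : ℝ) k₂]
  exact ⟨fun z hz => summable_norm_dblPoinTerm k₁ k₂ m₁ m₂ hA.le hwA.le hAk₁ hAk₂ ⟨z, hz⟩,
    fun K hK hKc => tendstoUniformlyOn_dblPoin_of_isCompact k₁ k₂ m₁ m₂ hA.le hwA.le hAk₁ hAk₂
      hK hKc,
    differentiableOn_dblPoin k₁ k₂ m₁ m₂ hA.le hwA.le hAk₁ hAk₂,
    fun γ z hz => dblPoin_actZ k₁ k₂ w m₁ m₂ γ hz,
    tendsto_dblPoin_comap_im_atTop k₁ k₂ m₁ m₂ hA hwA.le hAk₁ hAk₂⟩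
end
end
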